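/- In the IDM-TC mechanism on a tree-structured economic network with truthful reports, the seller's revenue equals W*_{-d_1}, the optimal social welfare when the agents in d_1 (the subtree of the first diffusion-critical agent of the winner) are removed, and this revenue is nonnegative. -/
import Mathlib


/-! A tree-structured economic network.  Agents `A` form a tree via `parent`
(`parent a = none` means the seller `s` is `a`'s parent).  Buyers have values,
intermediate nodes have costs. -/

/-- `Anc parent i a` : `i` lies on the unique path from the seller to `a`
(`i` is an ancestor of `a`, or `a` itself).  In a tree these are exactly the
diffusion-critical agents of `a`, so `d_i = {a | Anc parent i a}`. -/
inductive Anc {A : Type*} (parent : A → Option A) : A → A → Prop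
  | refl (a : A) : Anc parent a a
  | step {a p x : A} : parent a = some p → Anc parent x p → Anc parent x a

/-- `d_i`, the set of agents having `i` as a diffusion-critical agent. -/
def dSet {A : Type*} (parent : A → Option A) (i : A) : Set A :=
  {a | Anc parent i a}

/-- `Informed parent σ a` : under the sharing reports `σ` (intermediate node `p`
shares the sale information with `a` iff `σ p a`), agent `a` is informed of the
sale, i.e. participates in a feasible report profile. -/
inductive Informed {A : Type*} (parent : A → Option A) (σ : A → A → Prop) : A → Prop
  | root {a : A} : parent a = none → Informed parent σ a
  | step {a p : A} : parent a = some p → Informed parent σ p → σ p a →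
      Informed parent σ a

open Classical in
/-- `Wrem parent isBuyer σ β pathCost X` : the optimal social welfare `W*_{-X}`
of the report profile in which the agents of `X` are removed: the maximum, over
informed buyers `a ∉ X`, of the reported bid `β a` minus the transaction costs
`pathCost a` along the unique chain from the seller to `a` (at least `0`, since
not trading is allowed). -/
noncomputable def Wrem {A : Type*} [Fintype A] (parent : A → Option A)
    (isBuyer : A → Prop) (σ : A → A → Prop) (β : A → ℝ) (pathCost : A → ℝ)
    (X : Set A) : ℝ :=
  (insert (0 : ℝ)
      ((Finset.univ.filter
          (fun a => isBuyer a ∧ Informed parent σ a ∧ a ∉ X)).image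
        (fun a => β a - pathCost a))).max' (Finset.insert_nonempty _ _)

open Classical in
/-- The utility of agent `i` under IDM-TC, given reports `(β, σ)`, the selected
winner `w` (`none` if no trade), the successor map `nxt` along the winner's chain,
`i`'s true value `b i` and cost `c i`.  The winner `m` pays
`W*_{-m} + Σ costs = W*_{-{m}} + pathCost m`; an intermediate node `i` on the chain
pays `W*_{-d_i} - W*_{-d_{i+1}} - c i` (so her utility is
`W*_{-d_{nxt i}} - W*_{-d_i}`); everyone else pays `0`. -/
noncomputable def utilIDMTC {A : Type*} [Fintype A] (parent : A → Option A)
    (isBuyer : A → Prop) (b : A → ℝ) (pathCost : A → ℝ)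
    (β : A → ℝ) (σ : A → A → Prop) (w : Option A) (nxt : A → A) (i : A) : ℝ :=
  match w with
  | none => 0
  | some m =>
      if i = m then
        b i - (Wrem parent isBuyer σ β pathCost {m} + pathCost m)
      else if Anc parent i m then
        Wrem parent isBuyer σ β pathCost (dSet parent (nxt i))
          - Wrem parent isBuyer σ β pathCost (dSet parent i)
      else 0

/-- `w` is a valid (efficient) choice of winner for the report profile `(β, σ)`. -/
def ValidWinner {A : Type*} (parent : A → Option A) (isBuyer : A → Prop)
    (σ : A → A → Prop) (β : A → ℝ) (pathCost : A → ℝ) (w : Option A) : Prop :=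
  (w = none → ∀ a, isBuyer a → Informed parent σ a → β a - pathCost a ≤ 0) ∧
  (∀ m, w = some m → isBuyer m ∧ Informed parent σ m ∧ 0 ≤ β m - pathCost m ∧
    ∀ a, isBuyer a → Informed parent σ a → β a - pathCost a ≤ β m - pathCost m)

/-- `nxt` correctly gives, for each agent on the chain to the winner `m`, her
successor on that chain. -/
def ValidNxt {A : Type*} (parent : A → Option A) (m : A) (nxt : A → A) : Prop :=
  ∀ j, Anc parent j m → j ≠ m → parent (nxt j) = some j ∧ Anc parent (nxt j) m

theorem test : True := trivial

open Classical in
/-- The IDM-TC payment of agent `a` when the winner is `m` with successor map `nxt`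
along the (unique) chain to `m`: the winner pays `W*_{-m} + Σ_{j∈C_m\{m}} c_j
= W*_{-{m}} + pathCost m`; an intermediate node `a ∈ C_m \ {m}` pays
`W*_{-d_a} - W*_{-d_{a+1}} - c_a`; all other agents pay `0`. -/
noncomputable def payIDMTC {A : Type*} [Fintype A] (parent : A → Option A)
    (isBuyer : A → Prop) (c : A → ℝ) (pathCost : A → ℝ)
    (β : A → ℝ) (σ : A → A → Prop) (m : A) (nxt : A → A) (a : A) : ℝ :=
  if a = m then Wrem parent isBuyer σ β pathCost {m} + pathCost m
  else if Anc parent a m then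
    Wrem parent isBuyer σ β pathCost (dSet parent a)
      - Wrem parent isBuyer σ β pathCost (dSet parent (nxt a)) - c a
  else 0

section AuxLemmas
variable {A : Type*} {parent : A → Option A}

lemma anc_trans {x y z : A} (h2 : Anc parent y z) :
    Anc parent x y → Anc parent x z := by
  induction h2 with
  | refl => exact id
  | step hp _ ih => exact fun h1 => Anc.step hp (ih h1)

lemma anc_depth {depth : A → ℕ}
    (hdepth : ∀ a p, parent a = some p → depth p < depth a)
    {x a : A} (h : Anc parent x a) : depth x ≤ depth a := by
  induction h with
  | refl => exact le_rfl
  | step hp _ ih => exact ih.trans (hdepth _ _ hp).le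

lemma anc_antisymm {depth : A → ℕ}
    (hdepth : ∀ a p, parent a = some p → depth p < depth a)
    {x a : A} (h1 : Anc parent x a) (h2 : Anc parent a x) : x = a := by
  cases h1 with
  | refl => rfl
  | step hp h' =>
    have h3 := anc_depth hdepth h'
    have h4 := anc_depth hdepth h2
    have h5 := hdepth _ _ hp
    omega

lemma anc_comparable {x y m : A} (hy : Anc parent y m) :
    Anc parent x m → Anc parent x y ∨ Anc parent y x := by
  induction hy with
  | refl => exact fun hx => Or.inl hx
  | step hp hyp ih =>
    intro hx
    cases hx with
    | refl => exact Or.inr (Anc.step hp hyp)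
    | step hp' hxp' =>
      obtain rfl := Option.some.inj (hp.symm.trans hp')
      exact ih hxp'

lemma anc_sib {depth : A → ℕ}
    (hdepth : ∀ a p, parent a = some p → depth p < depth a)
    {x y p : A} (h : Anc parent x y)
    (hpx : parent x = some p) (hpy : parent y = some p) : x = y := by
  cases h with
  | refl => rfl
  | step hq h'' =>
    obtain rfl := Option.some.inj (hpy.symm.trans hq)
    have h3 := anc_depth hdepth h''
    have h4 := hdepth _ _ hpx
    omega

lemma anc_unique_child {depth : A → ℕ}
    (hdepth : ∀ a p, parent a = some p → depth p < depth a)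
    {x y p m : A} (hx : Anc parent x m) (hy : Anc parent y m)
    (hpx : parent x = some p) (hpy : parent y = some p) : x = y := by
  rcases anc_comparable hy hx with h | h
  · exact anc_sib hdepth h hpx hpy
  · exact (anc_sib hdepth h hpy hpx).symm

lemma anc_root {r x : A} (h0 : parent r = none) (h : Anc parent x r) : x = r := by
  cases h with
  | refl => rfl
  | step hp _ => rw [h0] at hp; exact absurd hp (by simp)

lemma anc_of_leaf {x a : A} (h : Anc parent x a) :
    (∀ y, parent y ≠ some x) → a = x := by
  induction h with
  | refl => exact fun _ => rfl
  | step hp _ ih => intro hx; cases ih hx; exact absurd hp (hx _)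

end AuxLemmas

/-- in IDM-TC on a tree-structured economic network with truthful
reports (`β = b`, full sharing `σ`), the seller's revenue (the sum of all agents'
payments) equals `W*_{-d_1}`, where `1` (= `a1`) is the first diffusion-critical
agent on the winner's chain, and this revenue is nonnegative. -/
theorem stmt3 {A : Type*} [Fintype A] (parent : A → Option A)
    (depth : A → ℕ) (hdepth : ∀ a p, parent a = some p → depth p < depth a)
    (isBuyer : A → Prop)
    (hleaf : ∀ a x, isBuyer a → parent x ≠ some a)
    (b c : A → ℝ) (hb : ∀ a, 0 ≤ b a) (hc : ∀ a, 0 ≤ c a)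
    (pathCost : A → ℝ)
    (hpc0 : ∀ a, parent a = none → pathCost a = 0)
    (hpcs : ∀ a p, parent a = some p → pathCost a = pathCost p + c p)
    (σ : A → A → Prop) (hσ : ∀ p a, σ p a ↔ parent a = some p)
    (m : A) (hm : ValidWinner parent isBuyer σ b pathCost (some m))
    (nxt : A → A) (hnxt : ValidNxt parent m nxt)
    (a1 : A) (ha1 : parent a1 = none ∧ Anc parent a1 m) :
    (∑ a : A, payIDMTC parent isBuyer c pathCost b σ m nxt a) =
      Wrem parent isBuyer σ b pathCost (dSet parent a1) ∧
    0 ≤ ∑ a : A, payIDMTC parent isBuyer c pathCost b σ m nxt a := by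
  classical
  obtain ⟨ha1r, ha1m⟩ := ha1
  set W : Set A → ℝ := Wrem parent isBuyer σ b pathCost with hW
  set pay : A → ℝ := payIDMTC parent isBuyer c pathCost b σ m nxt with hpay
  -- key telescoping lemma along the chain
  have key : ∀ {j m' : A}, Anc parent j m' → Anc parent m' m →
      ∑ a ∈ Finset.univ.filter
          (fun x => Anc parent j x ∧ Anc parent x m' ∧ x ≠ m'), pay a
        = W (dSet parent j) - W (dSet parent m')
            - (pathCost m' - pathCost j) := by
    intro j m' hj
    induction hj with
    | refl a =>
      intro _
      have hempty : Finset.univ.filter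
          (fun x => Anc parent a x ∧ Anc parent x a ∧ x ≠ a) = ∅ := by
        apply Finset.filter_false_of_mem
        rintro x - ⟨h1, h2, h3⟩
        exact h3 (anc_antisymm hdepth h2 h1)
      rw [hempty]
      simp
    | @step a p j hp hjp ih =>
      intro ham
      have hpa : Anc parent p a := Anc.step hp (Anc.refl p)
      have hpm : Anc parent p m := anc_trans ham hpa
      have hdpa : depth p < depth a := hdepth _ _ hp
      have hdam : depth a ≤ depth m := anc_depth hdepth ham
      have hpnea : p ≠ a := fun h => by rw [h] at hdpa; omega
      have hpnem : p ≠ m := fun h => by rw [h] at hdpa; omega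
      have hset : Finset.univ.filter
            (fun x => Anc parent j x ∧ Anc parent x a ∧ x ≠ a)
          = insert p (Finset.univ.filter
            (fun x => Anc parent j x ∧ Anc parent x p ∧ x ≠ p)) := by
        ext y
        simp only [Finset.mem_filter, Finset.mem_univ, true_and,
          Finset.mem_insert]
        constructor
        · rintro ⟨hjy, hya, hyne⟩
          by_cases hyp : y = p
          · exact Or.inl hyp
          · right
            refine ⟨hjy, ?_, hyp⟩
            cases hya with
            | refl => exact absurd rfl hyne
            | step hq hq' =>
              obtain rfl := Option.some.inj (hp.symm.trans hq)
              exact hq'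
        · rintro (rfl | ⟨hjy, hyp, hynep⟩)
          · exact ⟨hjp, hpa, hpnea⟩
          · refine ⟨hjy, anc_trans hpa hyp, ?_⟩
            rintro rfl
            have := anc_depth hdepth hyp
            omega
      have hpnotin : p ∉ Finset.univ.filter
          (fun x => Anc parent j x ∧ Anc parent x p ∧ x ≠ p) := by
        simp
      have hnxt' := hnxt p hpm hpnem
      have hnxtp : nxt p = a :=
        anc_unique_child hdepth hnxt'.2 ham hnxt'.1 hp
      have hpayp : pay p = W (dSet parent p) - W (dSet parent a) - c p := by
        rw [hpay, payIDMTC, if_neg hpnem, if_pos hpm, hnxtp]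
      have hpc : pathCost a = pathCost p + c p := hpcs a p hp
      rw [hset, Finset.sum_insert hpnotin, ih hpm, hpayp, hpc]
      ring
  -- reduce the full sum to the chain
  have hmbuyer := (hm.2 m rfl).1
  have hdsetm : dSet parent m = {m} := by
    ext x
    simp only [dSet, Set.mem_setOf_eq, Set.mem_singleton_iff]
    constructor
    · intro h
      exact anc_of_leaf h (fun y => hleaf m y hmbuyer)
    · rintro rfl; exact Anc.refl _
  have ha1x : ∀ x, Anc parent x m → Anc parent a1 x := by
    intro x hx
    rcases anc_comparable hx ha1m with h | h
    · exact h
    · obtain rfl := anc_root ha1r h; exact Anc.refl _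
  have hfull : ∑ a : A, pay a
      = ∑ a ∈ Finset.univ.filter
          (fun x => x = m ∨ (Anc parent a1 x ∧ Anc parent x m ∧ x ≠ m)),
            pay a := by
    symm
    apply Finset.sum_filter_of_ne
    intro x _ hx0
    by_cases hxm : x = m
    · exact Or.inl hxm
    · right
      by_cases hxa : Anc parent x m
      · exact ⟨ha1x x hxa, hxa, hxm⟩
      · exfalso
        apply hx0
        rw [hpay, payIDMTC, if_neg hxm, if_neg hxa]
  have hsplit : Finset.univ.filter
        (fun x => x = m ∨ (Anc parent a1 x ∧ Anc parent x m ∧ x ≠ m))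
      = insert m (Finset.univ.filter
        (fun x => Anc parent a1 x ∧ Anc parent x m ∧ x ≠ m)) := by
    ext y
    simp only [Finset.mem_filter, Finset.mem_univ, true_and, Finset.mem_insert]
  have hmnotin : m ∉ Finset.univ.filter
      (fun x => Anc parent a1 x ∧ Anc parent x m ∧ x ≠ m) := by simp
  have hpaym : pay m = W {m} + pathCost m := by
    rw [hpay, payIDMTC, if_pos rfl]
  have hmain : ∑ a : A, pay a = W (dSet parent a1) := by
    rw [hfull, hsplit, Finset.sum_insert hmnotin, hpaym,
      key ha1m (Anc.refl m), hdsetm, hpc0 a1 ha1r]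
    ring
  refine ⟨hmain, ?_⟩
  rw [hmain, hW, Wrem]
  exact Finset.le_max' _ 0 (Finset.mem_insert_self _ _)
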